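/- Let f, g : F_2^m → F_2 with f(0)=g(0)=0, and let a ∈ F_2^m. The codeword f+s_a covers the codeword g+s_a if and only if (f+g)^(0) + f̂(a) − ĝ(a) = 2^m. -/

import Mathlib

open Finset

/-- Standard inner product on `F_2^m`. -/
def ip {m : ℕ} (w x : Fin m → ZMod 2) : ZMod 2 := ∑ i, w i * x i

/-- Signed Walsh transform `ĥ(w) = Σ_x (-1)^(h(x)+w·x)`. -/
def walshS {m : ℕ} (h : (Fin m → ZMod 2) → ZMod 2) (w : Fin m → ZMod 2) : ℤ :=
  ∑ x : Fin m → ZMod 2, (-1 : ℤ) ^ ((h x + ip w x).val)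

/-- `covers c d` : support containment `Supp(c) ⊆ Supp(d)`, i.e. `c ⪯ d`. -/
def covers {ι : Type*} (c d : ι → ZMod 2) : Prop := ∀ x, c x ≠ 0 → d x ≠ 0

/-!
Pointwise, with `u = f x`, `v = g x`, `w = a·x`, the quantity
`(-1)^(u+v) + (-1)^(u+w) - (-1)^(v+w)` is `-3` when `u + w = 1` and `v + w = 0`, and `1` otherwise.
Summing over `x`, `(f+g)^(0) + f^(a) - g^(a)` is at most `2^m`, with equality exactly when every term is `1`,
i.e. when `f + s_a` covers `g + s_a`; the point `x = 0` contributes `1` because `f 0 = 0`.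
-/

lemma neg_one_pow_add_sub_le_one (u v w : ZMod 2) :
    (-1 : ℤ) ^ (u + v).val + (-1) ^ (u + w).val - (-1) ^ (v + w).val ≤ 1 := by
  revert u v w; decide

lemma neg_one_pow_add_sub_eq_one_iff (u v w : ZMod 2) :
    (-1 : ℤ) ^ (u + v).val + (-1) ^ (u + w).val - (-1) ^ (v + w).val = 1 ↔
      (u + w ≠ 0 → v + w ≠ 0) := by
  revert u v w; decide

lemma ip_zero_left {m : ℕ} (x : Fin m → ZMod 2) : ip 0 x = 0 := by
  simp [ip]

lemma ip_zero_right {m : ℕ} (w : Fin m → ZMod 2) : ip w 0 = 0 := by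
  simp [ip]

lemma walshS_add_zero_add_sub {m : ℕ} (f g : (Fin m → ZMod 2) → ZMod 2) (a : Fin m → ZMod 2) :
    walshS (f + g) 0 + walshS f a - walshS g a =
      ∑ x, ((-1 : ℤ) ^ (f x + g x).val + (-1) ^ (f x + ip a x).val
        - (-1) ^ (g x + ip a x).val) := by
  simp only [walshS, Pi.add_apply, ip_zero_left, add_zero, ← sum_add_distrib, ← sum_sub_distrib]

lemma Fintype.sum_eq_card_iff_forall_eq_one {ι : Type*} [Fintype ι] {F : ι → ℤ}
    (hF : ∀ i, F i ≤ 1) : ∑ i, F i = Fintype.card ι ↔ ∀ i, F i = 1 := by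
  have key := sum_eq_sum_iff_of_le (s := univ) (fun i _ => hF i)
  simp only [sum_const, card_univ, nsmul_eq_mul, mul_one, mem_univ, forall_const] at key
  exact key

lemma covers_subtype_ne_iff {ι : Type*} {c d : ι → ZMod 2} {x₀ : ι} (hc : c x₀ = 0) :
    covers (fun x : {x // x ≠ x₀} => c x.1) (fun x => d x.1) ↔ covers c d := by
  refine ⟨fun h x hx => ?_, fun h x hx => h x.1 hx⟩
  by_cases hx₀ : x = x₀
  · exact absurd (hx₀ ▸ hc) hx
  · exact h ⟨x, hx₀⟩ hx

theorem stmt_6_general (m : ℕ) (f g : (Fin m → ZMod 2) → ZMod 2)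
    (hf0 : f 0 = 0) (a : Fin m → ZMod 2) :
    covers (fun x : {x : Fin m → ZMod 2 // x ≠ 0} => f x.1 + ip a x.1)
           (fun x : {x : Fin m → ZMod 2 // x ≠ 0} => g x.1 + ip a x.1)
      ↔ walshS (f + g) 0 + walshS f a - walshS g a = 2 ^ m := by
  have hcard : ((Fintype.card (Fin m → ZMod 2) : ℕ) : ℤ) = 2 ^ m := by simp
  have hf0a : f 0 + ip a 0 = 0 := by rw [hf0, ip_zero_right, add_zero]
  rw [covers_subtype_ne_iff (c := fun x => f x + ip a x) (d := fun x => g x + ip a x) hf0a,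
    walshS_add_zero_add_sub, ← hcard,
    Fintype.sum_eq_card_iff_forall_eq_one fun x => neg_one_pow_add_sub_le_one _ _ _]
  simp only [neg_one_pow_add_sub_eq_one_iff, covers]

theorem stmt_6 (m : ℕ) (f g : (Fin m → ZMod 2) → ZMod 2)
    (hf0 : f 0 = 0) (hg0 : g 0 = 0) (a : Fin m → ZMod 2) :
    covers (fun x : {x : Fin m → ZMod 2 // x ≠ 0} => f x.1 + ip a x.1)
           (fun x : {x : Fin m → ZMod 2 // x ≠ 0} => g x.1 + ip a x.1)
      ↔ walshS (f + g) 0 + walshS f a - walshS g a = 2 ^ m :=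
  stmt_6_general m f g hf0 a
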